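/- arXiv:1905.09590 — 2 statements merged into one kernel-verified Lean document; each statement's English description precedes it below -/
import Mathlib

section
/- Let n ≥ 1 and S be a type, and let α, β : ℕ → (Fin n → S) be sequences such that for every p ∈ Fin n the set {t ∈ ℕ : α t p ≠ β t p} is upward closed (i.e., if α and β differ in coordinate p at time t, they differ in coordinate p at every later time). For each p define d_{{p}}(α,β) = 2^{-inf{t : α t p ≠ β t p}} (0 if no such t). Then min over p ∈ Fin n of d_{{p}}(α,β) equals 2^{-inf{t ∈ ℕ : ∀ p ∈ Fin n, α t p ≠ β t p}} (with value 0 if no such t exists). -/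
open Classical in
/-- The single-process view distance `d_{{p}}(α,β) = 2^{-inf{t | α t p ≠ β t p}}`
(`0` if `p`'s coordinate never differs). -/
noncomputable def procDist {n : ℕ} {S : Type*} (p : Fin n)
    (α β : ℕ → Fin n → S) : ℝ :=
  if _ : ∃ t, α t p ≠ β t p then
    (2 : ℝ) ^ (-((sInf {t : ℕ | α t p ≠ β t p} : ℕ) : ℤ))
  else 0

open Classical in
/-- If for every process `p` the set of times at which `α` and `β` differ in
coordinate `p` is upward closed, then
`min_{p} d_{{p}}(α,β) = 2^{-inf{t | ∀ p, α t p ≠ β t p}}` (with value `0` if no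
such `t` exists). -/
theorem min_procDist_eq_allDiffer_dist {n : ℕ} (hn : 1 ≤ n) {S : Type*}
    (α β : ℕ → Fin n → S)
    (hup : ∀ p : Fin n, ∀ t t' : ℕ, t ≤ t' → α t p ≠ β t p → α t' p ≠ β t' p) :
    Finset.univ.inf' (Finset.univ_nonempty_iff.mpr ⟨⟨0, hn⟩⟩)
        (fun p => procDist p α β) =
      (if _ : ∃ t, ∀ p : Fin n, α t p ≠ β t p then
        (2 : ℝ) ^ (-((sInf {t : ℕ | ∀ p : Fin n, α t p ≠ β t p} : ℕ) : ℤ))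
      else 0) := by
  have hne : (Finset.univ : Finset (Fin n)).Nonempty :=
    Finset.univ_nonempty_iff.mpr ⟨⟨0, hn⟩⟩
  by_cases hall : ∀ p : Fin n, ∃ t, α t p ≠ β t p
  · -- each set nonempty
    set T : Fin n → ℕ := fun p => sInf {t : ℕ | α t p ≠ β t p} with hTdef
    set M : ℕ := Finset.univ.sup' hne T with hM
    have hmemT : ∀ p, α (T p) p ≠ β (T p) p := fun p => Nat.sInf_mem (hall p)
    have hMmem : ∀ p : Fin n, α M p ≠ β M p := fun p =>
      hup p (T p) M (Finset.le_sup' T (Finset.mem_univ p)) (hmemT p)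
    have hT : ∃ t, ∀ p : Fin n, α t p ≠ β t p := ⟨M, hMmem⟩
    rw [dif_pos hT]
    have hInf : sInf {t : ℕ | ∀ p : Fin n, α t p ≠ β t p} = M := by
      apply le_antisymm
      · exact Nat.sInf_le hMmem
      · apply Finset.sup'_le
        intro p _
        exact Nat.sInf_le (Nat.sInf_mem hT p)
    rw [hInf]
    have hproc : ∀ p : Fin n, procDist p α β = (2 : ℝ) ^ (-(T p : ℤ)) := by
      intro p; rw [procDist, dif_pos (hall p)]
    apply le_antisymm
    · obtain ⟨p, _, hp⟩ := Finset.exists_mem_eq_sup' hne T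
      calc Finset.univ.inf' hne (fun p => procDist p α β) ≤ procDist p α β :=
            Finset.inf'_le _ (Finset.mem_univ p)
        _ = (2 : ℝ) ^ (-(M : ℤ)) := by rw [hproc, hM, hp]
    · apply Finset.le_inf'
      intro p _
      rw [hproc]
      apply zpow_le_zpow_right₀ (by norm_num : (1:ℝ) ≤ 2)
      simp only [neg_le_neg_iff, Int.ofNat_le]
      exact Finset.le_sup' T (Finset.mem_univ p)
  · push_neg at hall
    obtain ⟨p, hp⟩ := hall
    have h0 : procDist p α β = 0 := by
      rw [procDist, dif_neg]; push_neg; exact hp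
    have hRHS : ¬ ∃ t, ∀ q : Fin n, α t q ≠ β t q := by
      rintro ⟨t, ht⟩; exact ht p (hp t)
    rw [dif_neg hRHS]
    apply le_antisymm
    · calc Finset.univ.inf' hne (fun q => procDist q α β) ≤ procDist p α β :=
          Finset.inf'_le _ (Finset.mem_univ p)
        _ = 0 := h0
    · apply Finset.le_inf'
      intro q _
      rw [procDist]
      split
      · positivity
      · exact le_refl 0
end

section
/- Let n ≥ 1, and let A, B be types. Let τ : (ℕ → (Fin n → A)) → (ℕ → (Fin n → B)) satisfy: for all sequences a, b, all p ∈ Fin n, and all t ∈ ℕ, if a s p = b s p for all s ≤ t, then (τ a) s p = (τ b) s p for all s ≤ t. Then d_min(τ a, τ b) ≤ d_min(a, b) for all a, b, where d_min(α,β) = min over p of 2^{-inf{t : α t p ≠ β t p}} (each term 0 if the coordinate never differs); in particular τ is continuous when both spaces carry the topology 𝒯(d_min) induced by the distance function d_min. -/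
/-- The topology induced by an arbitrary distance function `d : X → X → ℝ`:
`U` is open iff every `x ∈ U` has some `ε`-ball `{y | d x y < ε}` (`ε > 0`)
contained in `U`. -/
def distTopology {X : Type*} (d : X → X → ℝ) : TopologicalSpace X where
  IsOpen U := ∀ x ∈ U, ∃ ε > 0, {y | d x y < ε} ⊆ U
  isOpen_univ := fun _ _ => ⟨1, one_pos, fun _ _ => trivial⟩
  isOpen_inter := by
    intro U V hU hV x hx
    obtain ⟨ε₁, hε₁, h₁⟩ := hU x hx.1
    obtain ⟨ε₂, hε₂, h₂⟩ := hV x hx.2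
    refine ⟨min ε₁ ε₂, lt_min hε₁ hε₂, fun y hy => ?_⟩
    have hy' : d x y < min ε₁ ε₂ := hy
    exact ⟨h₁ (lt_of_lt_of_le hy' (min_le_left _ _)),
      h₂ (lt_of_lt_of_le hy' (min_le_right _ _))⟩
  isOpen_sUnion := by
    intro S hS x hx
    obtain ⟨U, hU, hxU⟩ := hx
    obtain ⟨ε, hε, h⟩ := hS U hU x hxU
    exact ⟨ε, hε, fun y hy => ⟨U, hU, h hy⟩⟩
/-- The minimum distance `d_min(α,β) = min_{p ∈ [n]} d_{{p}}(α,β)`. -/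
noncomputable def minDist {n : ℕ} {S : Type*} (hn : 1 ≤ n)
    (α β : ℕ → Fin n → S) : ℝ :=
  Finset.univ.inf' (Finset.univ_nonempty_iff.mpr ⟨⟨0, hn⟩⟩)
    (fun p => procDist p α β)


lemma procDist_nonneg' {n : ℕ} {S : Type*} (p : Fin n) (α β : ℕ → Fin n → S) :
    0 ≤ procDist p α β := by
  unfold procDist; split
  · positivity
  · exact le_rfl

/-- If `τ` determines each process's coordinate prefix from the corresponding
coordinate prefix, then `τ` is nonexpansive for `d_min`, and in particular
continuous when both sequence spaces carry the topology `𝒯(d_min)`. -/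
theorem transition_nonexpansive_and_continuous_minDist {n : ℕ} (hn : 1 ≤ n)
    {A B : Type*} (τ : (ℕ → Fin n → A) → (ℕ → Fin n → B))
    (hτ : ∀ (a b : ℕ → Fin n → A) (p : Fin n) (t : ℕ),
      (∀ s ≤ t, a s p = b s p) → ∀ s ≤ t, τ a s p = τ b s p) :
    (∀ a b : ℕ → Fin n → A, minDist hn (τ a) (τ b) ≤ minDist hn a b) ∧
    @Continuous (ℕ → Fin n → A) (ℕ → Fin n → B)
      (distTopology (minDist hn)) (distTopology (minDist hn)) τ := by
  have key : ∀ (a b : ℕ → Fin n → A) (p : Fin n),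
      procDist p (τ a) (τ b) ≤ procDist p a b := by
    intro a b p
    by_cases h : ∃ t, τ a t p ≠ τ b t p
    · have h' : ∃ t, a t p ≠ b t p := by
        obtain ⟨t, ht⟩ := h
        by_contra hc
        push_neg at hc
        exact ht (hτ a b p t (fun s _ => hc s) t le_rfl)
      rw [procDist, procDist, dif_pos h, dif_pos h']
      have hle : sInf {t | a t p ≠ b t p} ≤ sInf {t | τ a t p ≠ τ b t p} := by
        by_contra hlt
        push_neg at hlt
        have hmem := Nat.sInf_mem h
        have heq : ∀ s ≤ sInf {t | τ a t p ≠ τ b t p}, a s p = b s p := by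
          intro s hs
          by_contra hne
          have := Nat.sInf_le (show s ∈ {t | a t p ≠ b t p} from hne)
          omega
        exact hmem (hτ a b p _ heq _ le_rfl)
      exact zpow_le_zpow_right₀ one_le_two
        (by exact_mod_cast neg_le_neg (Int.ofNat_le.mpr hle))
    · rw [procDist, dif_neg h]
      unfold procDist; split
      · positivity
      · exact le_refl _
  have mono : ∀ a b : ℕ → Fin n → A, minDist hn (τ a) (τ b) ≤ minDist hn a b :=
    fun a b => Finset.le_inf' _ _ (fun p _ =>
      le_trans (Finset.inf'_le _ (Finset.mem_univ p)) (key a b p))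
  refine ⟨mono, @Continuous.mk _ _ (distTopology (minDist hn))
    (distTopology (minDist hn)) τ (fun U hU => ?_)⟩
  intro x hx
  obtain ⟨ε, hε, hball⟩ := hU (τ x) hx
  refine ⟨ε, hε, fun y hy => hball ?_⟩
  exact lt_of_le_of_lt (mono x y) hy
end
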